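/- Let m ≥ 1, μ ∈ ℝ^m, and let Σ be a positive-definite real m×m matrix. Let f be a probability density on ℝ^m such that x ↦ f(x)·log f(x) is integrable, with mean μ and covariance matrix Σ. If the differential entropy of f attains the maximum value, h(f) = (1/2)·log((2π)^m · det Σ) + m/2, then f equals the multivariate normal density g_{μ,Σ} almost everywhere with respect to Lebesgue measure. In particular, the entropy-maximizing density with the given mean and covariance is unique up to almost-everywhere equality. -/

import Mathlib

/-!
For densities `f`, `g` of equal mass, `f log f - f log g - f + g = g · klFun (f / g) ≥ 0` with
equality only where `f = g`, so `∫ f log f ≥ ∫ f log g`, with equality iff `f = g` a.e. (Gibbs).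
For `g = mvnPdf μ S`, `log g` is a constant minus half the quadratic form of `S⁻¹` at `x - μ`, so
`∫ f log g` is determined by the mass and the covariance of `f`: it is
`-(1/2) log ((2π)^m det S) - m/2`, minus the maximal entropy. A maximiser therefore attains
equality in Gibbs' inequality.
-/

open MeasureTheory Matrix Real

/-- The multivariate normal density on `ℝ^m` with mean `μ` and covariance `S`. -/
noncomputable def mvnPdf {m : ℕ} (μ : Fin m → ℝ) (S : Matrix (Fin m) (Fin m) ℝ)
    (x : Fin m → ℝ) : ℝ :=
  (2 * π) ^ (-(m : ℝ) / 2) * S.det ^ (-(1 : ℝ) / 2) *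
    Real.exp (-(1 / 2) * ((x - μ) ⬝ᵥ S⁻¹ *ᵥ (x - μ)))

/-- Differential entropy of a density `f` on `ℝ^m` (w.r.t. Lebesgue measure). -/
noncomputable def diffEntropy {m : ℕ} (f : (Fin m → ℝ) → ℝ) : ℝ :=
  -∫ x : Fin m → ℝ, f x * Real.log (f x)

open InformationTheory

section Gibbs

variable {α : Type*} [MeasurableSpace α] {ν : Measure α}

lemma mul_log_sub_mul_log_sub_add_eq_mul_klFun (a : ℝ) {b : ℝ} (hb : 0 < b) :
    a * log a - a * log b - a + b = b * klFun (a / b) := by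
  rcases eq_or_ne a 0 with rfl | ha
  · simp [klFun]
  · rw [klFun, log_div ha hb.ne']
    field_simp
    ring

theorem ae_eq_of_integral_mul_log_eq {f g : α → ℝ} (hf : 0 ≤ᵐ[ν] f) (hg : ∀ᵐ x ∂ν, 0 < g x)
    (hfi : Integrable f ν) (hgi : Integrable g ν)
    (hflogf : Integrable (fun x => f x * log (f x)) ν)
    (hflogg : Integrable (fun x => f x * log (g x)) ν)
    (h_int : ∫ x, f x ∂ν = ∫ x, g x ∂ν)
    (h_log : ∫ x, f x * log (f x) ∂ν = ∫ x, f x * log (g x) ∂ν) :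
    f =ᵐ[ν] g := by
  have hlog_sub : Integrable (fun x => f x * log (f x) - f x * log (g x)) ν := hflogf.sub hflogg
  have hlog_sub_sub : Integrable (fun x => f x * log (f x) - f x * log (g x) - f x) ν :=
    hlog_sub.sub hfi
  have hFi : Integrable (fun x => f x * log (f x) - f x * log (g x) - f x + g x) ν :=
    hlog_sub_sub.add hgi
  have hF_zero : ∫ x, f x * log (f x) - f x * log (g x) - f x + g x ∂ν = 0 := by
    rw [integral_add hlog_sub_sub hgi, integral_sub hlog_sub hfi, integral_sub hflogf hflogg, h_int,
      h_log]
    ring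
  set F := fun x => f x * log (f x) - f x * log (g x) - f x + g x
  have hF_kl : ∀ᵐ x ∂ν, F x = g x * klFun (f x / g x) :=
    hg.mono fun x hx => mul_log_sub_mul_log_sub_add_eq_mul_klFun (f x) hx
  have hF_nonneg : 0 ≤ᵐ[ν] F := by
    filter_upwards [hF_kl, hf, hg] with x hFx hfx hgx
    rw [Pi.zero_apply, hFx]
    exact mul_nonneg hgx.le (klFun_nonneg (div_nonneg hfx hgx.le))
  filter_upwards [(integral_eq_zero_iff_of_nonneg_ae hF_nonneg hFi).mp hF_zero, hF_kl, hf, hg]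
    with x hF0 hFx hfx hgx
  rw [Pi.zero_apply, hFx] at hF0
  have hkl := (mul_eq_zero.mp hF0).resolve_left hgx.ne'
  exact (div_eq_one_iff_eq hgx.ne').mp ((klFun_eq_zero_iff (div_nonneg hfx hgx.le)).mp hkl)

lemma integrable_mul_mul_of_integrable_mul_self_mul {u v w : α → ℝ} (hw : 0 ≤ᵐ[ν] w)
    (huvw : AEStronglyMeasurable (fun x => u x * v x * w x) ν)
    (hu : Integrable (fun x => u x * u x * w x) ν) (hv : Integrable (fun x => v x * v x * w x) ν) :
    Integrable (fun x => u x * v x * w x) ν := by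
  refine Integrable.mono' ((hu.add hv).div_const 2) huvw ?_
  filter_upwards [hw] with x hwx
  rw [Pi.zero_apply] at hwx
  rw [Pi.add_apply, Real.norm_eq_abs, abs_le]
  constructor <;> nlinarith [mul_nonneg (sq_nonneg (u x + v x)) hwx,
    mul_nonneg (sq_nonneg (u x - v x)) hwx]

end Gibbs

section Gaussian

variable {ι : Type*} [Fintype ι]

theorem integral_comp_mulVec [DecidableEq ι] {E : Type*} [NormedAddCommGroup E]
    [NormedSpace ℝ E] {A : Matrix ι ι ℝ} (hA : A.det ≠ 0) (F : (ι → ℝ) → E) :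
    ∫ x, F (A *ᵥ x) = |A.det|⁻¹ • ∫ x, F x := by
  have hinj : Function.Injective (toLin' A) :=
    mulVec_injective_iff_isUnit.mpr ((isUnit_iff_isUnit_det A).mpr hA.isUnit)
  have hemb : MeasurableEmbedding (toLin' A) :=
    ((toLin' A).isClosedEmbedding_of_injective (LinearMap.ker_eq_bot.mpr hinj)).measurableEmbedding
  change ∫ x, F (toLin' A x) = _
  rw [← hemb.integral_map, map_matrix_volume_pi_eq_smul_volume_pi hA,
    integral_smul_measure, ENNReal.toReal_ofReal (abs_nonneg _), abs_inv]

theorem integral_exp_neg_half_dotProduct_self :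
    ∫ x : ι → ℝ, exp (-(1 / 2) * (x ⬝ᵥ x)) = √((2 * π) ^ Fintype.card ι) := by
  have hprod : ∀ x : ι → ℝ, exp (-(1 / 2) * (x ⬝ᵥ x)) = ∏ i, exp (-(1 / 2) * x i ^ 2) := by
    intro x
    simp only [dotProduct, Finset.mul_sum, ← exp_sum, sq]
  simp_rw [hprod]
  rw [integral_fintype_prod_volume_eq_pow (fun t : ℝ => exp (-(1 / 2) * t ^ 2)),
    integral_gaussian, ← sqrt_sq (pow_nonneg (sqrt_nonneg _) _), ← pow_mul, mul_comm, pow_mul,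
    sq_sqrt (by positivity)]
  norm_num [div_div_eq_mul_div, mul_comm]

lemma transpose_mulVec_dotProduct_inv_transpose_mul_self_mulVec [DecidableEq ι]
    {B : Matrix ι ι ℝ} (hB : B.det ≠ 0) (y : ι → ℝ) :
    (Bᵀ *ᵥ y) ⬝ᵥ (Bᵀ * B)⁻¹ *ᵥ (Bᵀ *ᵥ y) = y ⬝ᵥ y := by
  have hBt : IsUnit Bᵀ.det := by rw [det_transpose]; exact hB.isUnit
  have hid : B * ((Bᵀ * B)⁻¹ * Bᵀ) = 1 := by
    rw [Matrix.mul_inv_rev, Matrix.mul_assoc, nonsing_inv_mul _ hBt, Matrix.mul_one,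
      mul_nonsing_inv _ hB.isUnit]
  rw [mulVec_mulVec, dotProduct_mulVec, ← vecMul_transpose, transpose_transpose, vecMul_vecMul,
    hid, vecMul_one]

open scoped MatrixOrder in
/-- Writing `S = Bᵀ B`, the substitution `x = Bᵀ y` turns the integrand into the standard one. -/
theorem integral_exp_neg_half_dotProduct_inv_mulVec [DecidableEq ι] {S : Matrix ι ι ℝ}
    (hS : S.PosDef) :
    ∫ x : ι → ℝ, exp (-(1 / 2) * (x ⬝ᵥ S⁻¹ *ᵥ x)) = √((2 * π) ^ Fintype.card ι * S.det) := by
  obtain ⟨B, rfl⟩ := CStarAlgebra.nonneg_iff_eq_star_mul_self.mp hS.posSemidef.nonneg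
  rw [star_eq_conjTranspose, conjTranspose_eq_transpose_of_trivial] at hS ⊢
  have hdet : (Bᵀ * B).det = B.det ^ 2 := by rw [det_mul, det_transpose, sq]
  have hB : B.det ≠ 0 := fun h => hS.det_pos.ne' (by rw [hdet, h]; ring)
  have hchange := integral_comp_mulVec (A := Bᵀ) (by rwa [det_transpose])
    fun x => exp (-(1 / 2) * (x ⬝ᵥ (Bᵀ * B)⁻¹ *ᵥ x))
  simp only [transpose_mulVec_dotProduct_inv_transpose_mul_self_mulVec hB,
    integral_exp_neg_half_dotProduct_self, det_transpose, smul_eq_mul] at hchange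
  rw [hdet, sqrt_mul (by positivity), sqrt_sq_eq_abs, hchange]
  field_simp [abs_pos.mpr hB]

end Gaussian

section SecondMoments

variable {ι : Type*} [Fintype ι] {ν : Measure (ι → ℝ)} {f : (ι → ℝ) → ℝ} {μ : ι → ℝ}

lemma mul_dotProduct_mulVec_eq_sum (c : ℝ) (v : ι → ℝ) (A : Matrix ι ι ℝ) :
    c * (v ⬝ᵥ A *ᵥ v) = ∑ i, ∑ j, A i j * (v i * v j * c) := by
  simp only [dotProduct, mulVec, Finset.mul_sum]
  refine Finset.sum_congr rfl fun i _ => Finset.sum_congr rfl fun j _ => ?_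
  ring

lemma integrable_mul_dotProduct_mulVec_sub
    (hint : ∀ i j, Integrable (fun x => (x i - μ i) * (x j - μ j) * f x) ν) (A : Matrix ι ι ℝ) :
    Integrable (fun x => f x * ((x - μ) ⬝ᵥ A *ᵥ (x - μ))) ν := by
  simp only [mul_dotProduct_mulVec_eq_sum, Pi.sub_apply]
  exact integrable_finsetSum _ fun i _ => integrable_finsetSum _ fun j _ =>
    (hint i j).const_mul _

lemma integral_mul_dotProduct_mulVec_sub
    (hint : ∀ i j, Integrable (fun x => (x i - μ i) * (x j - μ j) * f x) ν) (A : Matrix ι ι ℝ) :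
    ∫ x, f x * ((x - μ) ⬝ᵥ A *ᵥ (x - μ)) ∂ν =
      ∑ i, ∑ j, A i j * ∫ x, (x i - μ i) * (x j - μ j) * f x ∂ν := by
  simp only [mul_dotProduct_mulVec_eq_sum, Pi.sub_apply]
  refine (integral_finsetSum _ fun i _ => integrable_finsetSum _ fun j _ =>
    (hint i j).const_mul _).trans (Finset.sum_congr rfl fun i _ => ?_)
  refine (integral_finsetSum _ fun j _ => (hint i j).const_mul _).trans
    (Finset.sum_congr rfl fun j _ => ?_)
  exact integral_const_mul _ _

lemma sum_sum_inv_mul_self_of_isSymm [DecidableEq ι] {S : Matrix ι ι ℝ} (hS : S.IsSymm)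
    (hdet : IsUnit S.det) : ∑ i, ∑ j, S⁻¹ i j * S i j = Fintype.card ι := by
  have htrace : ∑ i, ∑ j, S⁻¹ i j * S i j = trace (S⁻¹ * Sᵀ) := by
    simp [trace, mul_apply]
  rw [htrace, hS.eq, nonsing_inv_mul _ hdet, trace_one]

end SecondMoments

section NormalDensity

variable {m : ℕ} {μ : Fin m → ℝ} {S : Matrix (Fin m) (Fin m) ℝ}

lemma mvnPdf_eq (hS : 0 < S.det) (x : Fin m → ℝ) :
    mvnPdf μ S x = (√((2 * π) ^ m * S.det))⁻¹ * exp (-(1 / 2) * ((x - μ) ⬝ᵥ S⁻¹ *ᵥ (x - μ))) := by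
  rw [mvnPdf, sqrt_eq_rpow, mul_rpow (by positivity) hS.le, ← rpow_natCast,
    ← rpow_mul (by positivity), mul_inv, ← rpow_neg (by positivity), ← rpow_neg hS.le]
  ring_nf

lemma mvnPdf_pos (hS : 0 < S.det) (x : Fin m → ℝ) : 0 < mvnPdf μ S x := by
  rw [mvnPdf_eq hS]
  positivity

lemma integral_mvnPdf (hS : S.PosDef) : ∫ x, mvnPdf μ S x = 1 := by
  simp_rw [mvnPdf_eq hS.det_pos]
  rw [integral_const_mul, integral_sub_right_eq_self
    (fun y => exp (-(1 / 2) * (y ⬝ᵥ S⁻¹ *ᵥ y))), integral_exp_neg_half_dotProduct_inv_mulVec hS,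
    Fintype.card_fin]
  exact inv_mul_cancel₀ (by have := hS.det_pos; positivity)

lemma log_mvnPdf (hS : 0 < S.det) (x : Fin m → ℝ) :
    log (mvnPdf μ S x) =
      -(1 / 2) * log ((2 * π) ^ m * S.det) - 1 / 2 * ((x - μ) ⬝ᵥ S⁻¹ *ᵥ (x - μ)) := by
  rw [mvnPdf_eq hS, log_mul (by positivity) (exp_ne_zero _), log_exp, log_inv, log_sqrt
    (by positivity)]
  ring

variable {f : (Fin m → ℝ) → ℝ}

lemma mul_log_mvnPdf_eq (hS : 0 < S.det) :
    (fun x => f x * log (mvnPdf μ S x)) = fun x =>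
      -(1 / 2) * log ((2 * π) ^ m * S.det) * f x - 1 / 2 * (f x * ((x - μ) ⬝ᵥ S⁻¹ *ᵥ (x - μ))) := by
  ext x
  rw [log_mvnPdf hS]
  ring

lemma integrable_mul_log_mvnPdf (hS : 0 < S.det) (hf : Integrable f)
    (hint : ∀ i j, Integrable fun x => (x i - μ i) * (x j - μ j) * f x) :
    Integrable fun x => f x * log (mvnPdf μ S x) := by
  rw [mul_log_mvnPdf_eq hS]
  exact (hf.const_mul _).sub ((integrable_mul_dotProduct_mulVec_sub hint _).const_mul _)

lemma integral_mul_log_mvnPdf (hS : S.PosDef) (hf : Integrable f) (hf_int : ∫ x, f x = 1)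
    (hint : ∀ i j, Integrable fun x => (x i - μ i) * (x j - μ j) * f x)
    (hcov : ∀ i j, ∫ x, (x i - μ i) * (x j - μ j) * f x = S i j) :
    ∫ x, f x * log (mvnPdf μ S x) = -(1 / 2) * log ((2 * π) ^ m * S.det) - m / 2 := by
  have hquad : ∫ x, f x * ((x - μ) ⬝ᵥ S⁻¹ *ᵥ (x - μ)) = m := by
    rw [integral_mul_dotProduct_mulVec_sub hint]
    simp_rw [hcov]
    rw [sum_sum_inv_mul_self_of_isSymm (isHermitian_iff_isSymm.mp hS.isHermitian)
      hS.det_pos.ne'.isUnit, Fintype.card_fin]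
  rw [mul_log_mvnPdf_eq hS.det_pos, integral_sub (hf.const_mul _)
    ((integrable_mul_dotProduct_mulVec_sub hint _).const_mul _), integral_const_mul,
    integral_const_mul, hf_int, hquad]
  ring

end NormalDensity

theorem eq_mvnPdf_of_diffEntropy_eq_max (m : ℕ) (μ : Fin m → ℝ)
    (S : Matrix (Fin m) (Fin m) ℝ) (hS : S.PosDef)
    (f : (Fin m → ℝ) → ℝ)
    (hf_nonneg : ∀ x, 0 ≤ f x)
    (hf_int : ∫ x : Fin m → ℝ, f x = 1)
    (hflogf : Integrable (fun x : Fin m → ℝ => f x * Real.log (f x)))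
    (hcov : ∀ i j, ∫ x : Fin m → ℝ, (x i - μ i) * (x j - μ j) * f x = S i j)
    (hmax : diffEntropy f = (1 / 2) * Real.log ((2 * π) ^ m * S.det) + m / 2) :
    ∀ᵐ x : Fin m → ℝ, f x = mvnPdf μ S x := by
  have hfi : Integrable f := .of_integral_ne_zero (by simp [hf_int])
  have hcov_int (i j : Fin m) : Integrable fun x => (x i - μ i) * (x j - μ j) * f x :=
    integrable_mul_mul_of_integrable_mul_self_mul (ae_of_all _ hf_nonneg) (by fun_prop)
      (.of_integral_ne_zero (by simp [hcov, hS.diag_pos.ne']))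
      (.of_integral_ne_zero (by simp [hcov, hS.diag_pos.ne']))
  have hg_int := integral_mvnPdf (μ := μ) hS
  refine ae_eq_of_integral_mul_log_eq (ae_of_all _ hf_nonneg) (ae_of_all _ (mvnPdf_pos hS.det_pos))
    hfi (.of_integral_ne_zero (by simp [hg_int])) hflogf
    (integrable_mul_log_mvnPdf hS.det_pos hfi hcov_int) (by rw [hf_int, hg_int]) ?_
  rw [integral_mul_log_mvnPdf hS hfi hf_int hcov_int hcov]
  rw [diffEntropy] at hmax
  linarith
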